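/- arXiv:1405.6298 — 2 statements merged into one kernel-verified Lean document; each statement's English description precedes it below -/
import Mathlib

section
/- Consider the harmonic oscillator ẋ₁ = −x₂, ẋ₂ = x₁ on ℝ² \ {0} with the cone field K(x) = {δx | k₁(x,δx) ≥ 0 and k₂(x,δx) ≥ 0}, where k₁(x,δx) = −(x₁+x₂)δx₁ + (x₁−x₂)δx₂ and k₂(x,δx) = −(x₂−x₁)δx₁ + (x₁+x₂)δx₂. Then along any solution (x(t), δx(t)) of the prolonged system ẋ = f(x), δẋ = Df(x)δx, the quantities k₁(x(t), δx(t)) and k₂(x(t), δx(t)) are constant in time. -/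
/-! Writing `d = x₁δx₁ + x₂δx₂` and `c = x₁δx₂ − x₂δx₁`, we have `k₁ = c − d` and `k₂ = c + d`.
Since `Df` is the constant rotation generator, `x` and `δx` rotate at the same unit angular speed,
so their dot product `d` and cross product `c` are conserved. -/

theorem is_const_of_hasDerivAt_zero {𝕜 G : Type*} [RCLike 𝕜] [NormedAddCommGroup G]
    [NormedSpace 𝕜 G] {f : 𝕜 → G} (hf : ∀ t, HasDerivAt f 0 t) (s t : 𝕜) : f s = f t :=
  is_const_of_deriv_eq_zero (fun t => (hf t).differentiableAt) (fun t => (hf t).deriv) s t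

section RotatingPair

variable {u₁ u₂ v₁ v₂ : ℝ → ℝ} {t : ℝ}
  (hu₁ : HasDerivAt u₁ (-u₂ t) t) (hu₂ : HasDerivAt u₂ (u₁ t) t)
  (hv₁ : HasDerivAt v₁ (-v₂ t) t) (hv₂ : HasDerivAt v₂ (v₁ t) t)
include hu₁ hu₂ hv₁ hv₂

theorem hasDerivAt_dot_of_rotating :
    HasDerivAt (fun t => u₁ t * v₁ t + u₂ t * v₂ t) 0 t :=
  ((hu₁.mul hv₁).add (hu₂.mul hv₂)).congr_deriv (by ring)

theorem hasDerivAt_cross_of_rotating :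
    HasDerivAt (fun t => u₁ t * v₂ t - u₂ t * v₁ t) 0 t :=
  ((hu₁.mul hv₂).sub (hu₂.mul hv₁)).congr_deriv (by ring)

end RotatingPair

theorem harmonic_oscillator_cone_invariants_general
    (x1 x2 δx1 δx2 : ℝ → ℝ)
    (hx1 : ∀ t, HasDerivAt x1 (-(x2 t)) t)
    (hx2 : ∀ t, HasDerivAt x2 (x1 t) t)
    (hδx1 : ∀ t, HasDerivAt δx1 (-(δx2 t)) t)
    (hδx2 : ∀ t, HasDerivAt δx2 (δx1 t) t) :
    ∀ s t : ℝ,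
      (-(x1 s + x2 s) * δx1 s + (x1 s - x2 s) * δx2 s =
       -(x1 t + x2 t) * δx1 t + (x1 t - x2 t) * δx2 t) ∧
      (-(x2 s - x1 s) * δx1 s + (x1 s + x2 s) * δx2 s =
       -(x2 t - x1 t) * δx1 t + (x1 t + x2 t) * δx2 t) := by
  intro s t
  have hdot : x1 s * δx1 s + x2 s * δx2 s = x1 t * δx1 t + x2 t * δx2 t :=
    is_const_of_hasDerivAt_zero
      (fun t => hasDerivAt_dot_of_rotating (hx1 t) (hx2 t) (hδx1 t) (hδx2 t)) s t
  have hcross : x1 s * δx2 s - x2 s * δx1 s = x1 t * δx2 t - x2 t * δx1 t :=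
    is_const_of_hasDerivAt_zero
      (fun t => hasDerivAt_cross_of_rotating (hx1 t) (hx2 t) (hδx1 t) (hδx2 t)) s t
  exact ⟨by linear_combination hcross - hdot, by linear_combination hcross + hdot⟩

theorem harmonic_oscillator_cone_invariants
    (x1 x2 δx1 δx2 : ℝ → ℝ)
    (hx1 : ∀ t, HasDerivAt x1 (-(x2 t)) t)
    (hx2 : ∀ t, HasDerivAt x2 (x1 t) t)
    (hnz : ∀ t, (x1 t, x2 t) ≠ (0, 0))
    (hδx1 : ∀ t, HasDerivAt δx1 (-(δx2 t)) t)
    (hδx2 : ∀ t, HasDerivAt δx2 (δx1 t) t) :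
    ∀ s t : ℝ,
      (-(x1 s + x2 s) * δx1 s + (x1 s - x2 s) * δx2 s =
       -(x1 t + x2 t) * δx1 t + (x1 t - x2 t) * δx2 t) ∧
      (-(x2 s - x1 s) * δx1 s + (x1 s + x2 s) * δx2 s =
       -(x2 t - x1 t) * δx1 t + (x1 t + x2 t) * δx2 t) :=
  harmonic_oscillator_cone_invariants_general x1 x2 δx1 δx2 hx1 hx2 hδx1 hδx2
end

section
/- Let A be an n×n matrix with strictly positive entries. Then A maps ℝⁿ₊ \ {0} into the interior of ℝⁿ₊, and the projective diameter of A(ℝⁿ₊\{0}) with respect to the Hilbert metric of ℝⁿ₊ is finite: sup {d(Ax, Ay) | x, y ∈ ℝⁿ₊\{0}} < ∞, where d(u,v) = log( maxᵢ(uᵢ/vᵢ) · maxᵢ(vᵢ/uᵢ) ) for u, v with strictly positive entries. -/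
/-! Let `κ` be the largest ratio `A i k / A j k` of two entries of `A` in the same column.
Every image vector `u = A x` of a nonnegative `x` then satisfies `u i ≤ κ u j` for all `i, j`,
so for two such vectors `(u i / v i) (v j / u j) = (u i / u j) (v j / v i) ≤ κ²`,
and the Hilbert distance `d(A x, A y)` is at most `2 log κ`. -/

namespace Matrix

variable {m n : Type*}

theorem mulVec_pos [Fintype n] {A : Matrix m n ℝ} (hA : ∀ i j, 0 < A i j) {x : n → ℝ}
    (hx : 0 ≤ x) (hx0 : x ≠ 0) (i : m) : 0 < (A *ᵥ x) i := by
  obtain ⟨k, hk⟩ := Function.ne_iff.mp hx0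
  exact Finset.sum_pos' (fun j _ => mul_nonneg (hA i j).le (hx j))
    ⟨k, Finset.mem_univ k, mul_pos (hA i k) ((hx k).lt_of_ne' hk)⟩

noncomputable def maxColumnRatio (A : Matrix m n ℝ) : ℝ :=
  ⨆ p : m × m × n, A p.1 p.2.2 / A p.2.1 p.2.2

theorem le_maxColumnRatio_mul [Finite m] [Finite n] {A : Matrix m n ℝ} (i j : m) {k : n}
    (hjk : 0 < A j k) : A i k ≤ A.maxColumnRatio * A j k :=
  (div_le_iff₀ hjk).mp <| le_ciSup (f := fun p : m × m × n => A p.1 p.2.2 / A p.2.1 p.2.2)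
    (Finite.bddAbove_range _) (i, j, k)

theorem mulVec_le_maxColumnRatio_mul [Finite m] [Fintype n] {A : Matrix m n ℝ}
    (hA : ∀ i j, 0 < A i j) {x : n → ℝ} (hx : 0 ≤ x) (i j : m) :
    (A *ᵥ x) i ≤ A.maxColumnRatio * (A *ᵥ x) j := by
  simp only [mulVec, dotProduct, Finset.mul_sum, ← mul_assoc]
  exact Finset.sum_le_sum fun k _ =>
    mul_le_mul_of_nonneg_right (le_maxColumnRatio_mul i j (hA j k)) (hx k)

end Matrix

section HilbertMetric

variable {ι : Type*} {u v : ι → ℝ} {κ : ℝ}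

theorem iSup_div_mul_iSup_div_le_sq (hu : ∀ i, 0 < u i) (hv : ∀ i, 0 < v i)
    (huκ : ∀ i j, u i ≤ κ * u j) (hvκ : ∀ i j, v i ≤ κ * v j) :
    (⨆ i, u i / v i) * (⨆ j, v j / u j) ≤ κ ^ 2 := by
  have hsup : 0 ≤ ⨆ j, v j / u j := Real.iSup_nonneg fun j => (div_pos (hv j) (hu j)).le
  rw [Real.iSup_mul_of_nonneg hsup]
  simp_rw [Real.mul_iSup_of_nonneg (div_pos (hu _) (hv _)).le]
  refine Real.iSup_le (fun i => Real.iSup_le (fun j => ?_) (sq_nonneg κ)) (sq_nonneg κ)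
  have hcross : u i * v j ≤ κ * u j * (κ * v i) :=
    mul_le_mul (huκ i j) (hvκ j i) (hv j).le ((hu i).le.trans (huκ i j))
  rw [div_mul_div_comm, div_le_iff₀ (mul_pos (hv i) (hu j))]
  linarith

theorem iSup_div_pos [Finite ι] [Nonempty ι] (hu : ∀ i, 0 < u i) (hv : ∀ i, 0 < v i) :
    0 < ⨆ i, u i / v i :=
  let i := Classical.arbitrary ι
  (div_pos (hu i) (hv i)).trans_le
    (le_ciSup (f := fun i => u i / v i) (Finite.bddAbove_range _) i)

theorem log_iSup_div_mul_iSup_div_le [Finite ι] [Nonempty ι] (hu : ∀ i, 0 < u i)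
    (hv : ∀ i, 0 < v i) (huκ : ∀ i j, u i ≤ κ * u j) (hvκ : ∀ i j, v i ≤ κ * v j) :
    Real.log ((⨆ i, u i / v i) * (⨆ j, v j / u j)) ≤ 2 * Real.log κ :=
  calc _ ≤ Real.log (κ ^ 2) :=
        Real.log_le_log (mul_pos (iSup_div_pos hu hv) (iSup_div_pos hv hu))
          (iSup_div_mul_iSup_div_le_sq hu hv huκ hvκ)
    _ = 2 * Real.log κ := by rw [Real.log_pow, Nat.cast_ofNat]

end HilbertMetric

theorem positive_matrix_finite_projective_diameter_general {n : ℕ}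
    (A : Matrix (Fin n) (Fin n) ℝ) (hA : ∀ i j, 0 < A i j) :
    (∀ x : Fin n → ℝ, (∀ i, 0 ≤ x i) → x ≠ 0 → ∀ i, 0 < A.mulVec x i) ∧
    ∃ C : ℝ, ∀ x y : Fin n → ℝ,
      (∀ i, 0 ≤ x i) → x ≠ 0 → (∀ i, 0 ≤ y i) → y ≠ 0 →
      Real.log ((⨆ i, A.mulVec x i / A.mulVec y i) * (⨆ i, A.mulVec y i / A.mulVec x i)) ≤ C := by
  refine ⟨fun x hx hx0 => A.mulVec_pos hA hx hx0, 2 * Real.log A.maxColumnRatio, ?_⟩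
  intro x y hx hx0 hy hy0
  have : Nonempty (Fin n) := (Function.ne_iff.mp hx0).nonempty
  exact log_iSup_div_mul_iSup_div_le (A.mulVec_pos hA hx hx0) (A.mulVec_pos hA hy hy0)
    (A.mulVec_le_maxColumnRatio_mul hA hx) (A.mulVec_le_maxColumnRatio_mul hA hy)

theorem positive_matrix_finite_projective_diameter {n : ℕ} (hn : 1 ≤ n)
    (A : Matrix (Fin n) (Fin n) ℝ) (hA : ∀ i j, 0 < A i j) :
    (∀ x : Fin n → ℝ, (∀ i, 0 ≤ x i) → x ≠ 0 → ∀ i, 0 < A.mulVec x i) ∧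
    ∃ C : ℝ, ∀ x y : Fin n → ℝ,
      (∀ i, 0 ≤ x i) → x ≠ 0 → (∀ i, 0 ≤ y i) → y ≠ 0 →
      Real.log ((⨆ i, A.mulVec x i / A.mulVec y i) * (⨆ i, A.mulVec y i / A.mulVec x i)) ≤ C :=
  positive_matrix_finite_projective_diameter_general A hA
end
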